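/- Let G have finite abelianization with finite symmetric generating set S. Then for each n ≥ 1, the diagonal matrix diag(□ₙ) ∈ M_{|S|×|S|}(ℝG), with □ₙ in every diagonal entry, is an order unit in M_{|S|×|S|}(I[G]). -/

import Mathlib

open MonoidAlgebra

variable {G : Type} [Group G]

/-- The additive map on the real group ring induced by `g ↦ g⁻¹`. -/
noncomputable def mstarHom (G : Type) [Group G] :
    MonoidAlgebra ℝ G →+ MonoidAlgebra ℝ G :=
  coeffAddEquiv.symm.toAddMonoidHom.comp
    ((Finsupp.mapDomain.addMonoidHom Inv.inv).comp coeffAddEquiv.toAddMonoidHom)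

lemma mstarHom_single (a : G) (r : ℝ) :
    mstarHom G (MonoidAlgebra.single a r) = MonoidAlgebra.single a⁻¹ r := by
  show MonoidAlgebra.mapDomain Inv.inv _ = _
  exact MonoidAlgebra.mapDomain_single

private lemma mstar_mul (f g : MonoidAlgebra ℝ G) :
    mstarHom G (f * g) = mstarHom G g * mstarHom G f := by
  induction f using MonoidAlgebra.induction_linear with
  | zero => simp
  | add a b ha hb => simp only [add_mul, map_add, ha, hb, mul_add]
  | single a r =>
    induction g using MonoidAlgebra.induction_linear with
    | zero => simp
    | add c d hc hd => simp only [mul_add, map_add, hc, hd, add_mul]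
    | single c s =>
      simp only [MonoidAlgebra.single_mul_single, mstarHom_single, mul_inv_rev,
        mul_comm]

/-- The star ring structure on `ℝG` whose involution is induced by `g ↦ g⁻¹`. -/
noncomputable instance grpStar : StarRing (MonoidAlgebra ℝ G) where
  star f := mstarHom G f
  star_involutive f := by
    show mstarHom G (mstarHom G f) = f
    induction f using MonoidAlgebra.induction_linear with
    | zero => simp
    | add a b ha hb => simp only [map_add, ha, hb]
    | single a r => simp only [mstarHom_single, inv_inv]
  star_add f g := map_add _ f g
  star_mul f g := mstar_mul f g

/-- The augmentation ideal `I[G]`, as an `ℝ`-subspace of `ℝG`: the kernel of the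
augmentation homomorphism sending every group element to `1`. -/
noncomputable def Iaug (G : Type) [Group G] : Submodule ℝ (MonoidAlgebra ℝ G) :=
  LinearMap.ker ((MonoidAlgebra.lift ℝ ℝ G 1).toLinearMap)

/-- Sums of hermitian squares `∑ aᵢ* aᵢ` in a `*`-algebra. -/
noncomputable def SOS (A : Type*) [NonUnitalSemiring A] [StarRing A] : AddSubmonoid A :=
  AddSubmonoid.closure {x | ∃ a, x = star a * a}

/-- `□₀ = 1`, `□ₙ = ∑_{s₁,…,sₙ∈S} (1-sₙ)*⋯(1-s₁)*(1-s₁)⋯(1-sₙ)`, defined by the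
recursion `□_{n+1} = ∑_{s∈S} (1-s)* □ₙ (1-s)`. -/
noncomputable def box (S : Finset G) : ℕ → MonoidAlgebra ℝ G
  | 0 => 1
  | n + 1 => ∑ s ∈ S,
      star (1 - MonoidAlgebra.of ℝ G s) * box S n * (1 - MonoidAlgebra.of ℝ G s)

namespace OUaux
noncomputable section
open Finset
open scoped commutatorElement
set_option linter.unusedSectionVars false
set_option maxHeartbeats 1000000

local notation "RG" => MonoidAlgebra ℝ G

lemma star_def (f : MonoidAlgebra ℝ G) : star f = mstarHom G f := rfl

lemma star_of (g : G) : star (of ℝ G g : RG) = of ℝ G g⁻¹ := by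
  rw [star_def, MonoidAlgebra.of_apply, MonoidAlgebra.of_apply]
  exact mstarHom_single g 1

instance : StarModule ℝ (MonoidAlgebra ℝ G) where
  star_smul c f := by
    show mstarHom G (c • f) = star c • mstarHom G f
    rw [star_trivial]
    induction f using MonoidAlgebra.induction_linear with
    | zero => simp
    | add a b ha hb => simp only [smul_add, map_add, ha, hb]
    | single a r => simp only [MonoidAlgebra.smul_single, mstarHom_single]

/-! ### Generic SOS facts -/

section gen
variable {A : Type*} [Ring A] [StarRing A] [Module ℝ A] [StarModule ℝ A]
  [IsScalarTower ℝ A A] [SMulCommClass ℝ A A]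

lemma sq_mem (a : A) : star a * a ∈ SOS A := AddSubmonoid.subset_closure ⟨a, rfl⟩

lemma one_mem_sos : (1 : A) ∈ SOS A := by simpa using sq_mem (1 : A)

lemma sos_smul {c : ℝ} (hc : 0 ≤ c) {x : A} (hx : x ∈ SOS A) : c • x ∈ SOS A := by
  refine AddSubmonoid.closure_induction ?_ ?_ ?_ hx
  · rintro y ⟨a, rfl⟩
    have h1 : star (Real.sqrt c • a) * (Real.sqrt c • a) = c • (star a * a) := by
      rw [star_smul, star_trivial (Real.sqrt c), smul_mul_assoc, mul_smul_comm, smul_smul,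
        Real.mul_self_sqrt hc]
    rw [← h1]; exact sq_mem _
  · simpa using (SOS A).zero_mem
  · intro x y _ _ hx hy
    simpa [smul_add] using (SOS A).add_mem hx hy

lemma sos_conj (a : A) {x : A} (hx : x ∈ SOS A) : star a * x * a ∈ SOS A := by
  refine AddSubmonoid.closure_induction ?_ ?_ ?_ hx
  · rintro y ⟨b, rfl⟩
    have : star a * (star b * b) * a = star (b * a) * (b * a) := by
      rw [star_mul]; noncomm_ring
    rw [this]; exact sq_mem _
  · simpa using (SOS A).zero_mem
  · intro x y _ _ hx hy
    have : star a * (x + y) * a = star a * x * a + star a * y * a := by noncomm_ring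
    rw [this]; exact (SOS A).add_mem hx hy

/-- The SOS order: `sle x y` iff `y - x` is a sum of hermitian squares. -/
def sle (x y : A) : Prop := y - x ∈ SOS A

lemma sle_of_mem {x : A} (hx : x ∈ SOS A) : sle 0 x := by simpa [sle] using hx

lemma mem_of_sle {x : A} (h : sle 0 x) : x ∈ SOS A := by simpa [sle] using h

lemma sle_refl (x : A) : sle x x := by simp [sle]

lemma sle_trans {x y z : A} (h1 : sle x y) (h2 : sle y z) : sle x z := by
  have := (SOS A).add_mem h2 h1
  simpa [sle, sub_add_sub_cancel] using this

lemma sle_add {x y x' y' : A} (h1 : sle x y) (h2 : sle x' y') : sle (x + x') (y + y') := by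
  have := (SOS A).add_mem h1 h2
  simpa [sle, add_sub_add_comm] using this

lemma sle_smul {c : ℝ} (hc : 0 ≤ c) {x y : A} (h : sle x y) : sle (c • x) (c • y) := by
  have := sos_smul hc h
  simpa [sle, smul_sub] using this

lemma sle_conj (a : A) {x y : A} (h : sle x y) : sle (star a * x * a) (star a * y * a) := by
  have := sos_conj a h
  simpa [sle, mul_sub, sub_mul] using this

lemma sle_sum {ι : Type*} {F : Finset ι} {f g : ι → A}
    (h : ∀ i ∈ F, sle (f i) (g i)) : sle (∑ i ∈ F, f i) (∑ i ∈ F, g i) := by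
  unfold sle
  rw [← Finset.sum_sub_distrib]
  exact AddSubmonoid.sum_mem _ h

/-- parallelogram: `(a+b)*(a+b) ≤ 2a*a + 2b*b`. -/
lemma sle_par (a b : A) :
    sle (star (a + b) * (a + b)) (star a * a + star a * a + (star b * b + star b * b)) := by
  have key : star a * a + star a * a + (star b * b + star b * b)
      - star (a + b) * (a + b) = star (a - b) * (a - b) := by
    rw [star_add, star_sub]; noncomm_ring
  unfold sle
  rw [key]; exact sq_mem _

/-- parallelogram with a positive middle term. -/
lemma sle_par_mid (a b : A) {m : A} (hm : m ∈ SOS A) :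
    sle (star (a + b) * m * (a + b))
      (star a * m * a + star a * m * a + (star b * m * b + star b * m * b)) := by
  have key : star a * m * a + star a * m * a + (star b * m * b + star b * m * b)
      - star (a + b) * m * (a + b) = star (a - b) * m * (a - b) := by
    rw [star_add, star_sub]; noncomm_ring
  unfold sle
  rw [key]; exact sos_conj _ hm

/-- Finite sums, each dominated by a multiple of `u`, are dominated by a multiple of `u`. -/
lemma sle_sum_dom {ι : Type*} (F : Finset ι) (f : ι → A) (u : A)
    (h : ∀ i ∈ F, ∃ K : ℝ, 0 ≤ K ∧ sle (f i) (K • u)) :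
    ∃ K : ℝ, 0 ≤ K ∧ sle (∑ i ∈ F, f i) (K • u) := by
  classical
  induction F using Finset.induction_on with
  | empty => exact ⟨0, le_refl 0, by simpa [sle] using (SOS A).zero_mem⟩
  | @insert a F' hx ih =>
    obtain ⟨K1, hK1, h1⟩ := h a (Finset.mem_insert_self a F')
    obtain ⟨K2, hK2, h2⟩ := ih fun i hi => h i (Finset.mem_insert_of_mem hi)
    refine ⟨K1 + K2, by positivity, ?_⟩
    rw [Finset.sum_insert hx, add_smul]
    exact sle_add h1 h2

/-- Cauchy-Schwarz-ish: a square of a finite sum is dominated by a multiple of the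
sum of squares. -/
lemma sle_cs {ι : Type*} (F : Finset ι) (f : ι → A) :
    ∃ K : ℝ, 0 ≤ K ∧ sle (star (∑ i ∈ F, f i) * (∑ i ∈ F, f i))
      (K • ∑ i ∈ F, star (f i) * f i) := by
  classical
  induction F using Finset.induction_on with
  | empty => exact ⟨0, le_refl 0, by simpa [sle] using (SOS A).zero_mem⟩
  | @insert a F' hx ih =>
    obtain ⟨K, hK, hle⟩ := ih
    refine ⟨2 + 2 * K, by positivity, ?_⟩
    rw [Finset.sum_insert hx, Finset.sum_insert hx]
    have par := sle_par (f a) (∑ i ∈ F', f i)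
    -- (2+2K) • (sq a + Σsq) - star(fa+Σ)(fa+Σ)
    -- = [2 sq a + 2 sqΣ - star(fa+Σ)(fa+Σ)] + 2•(K•Σsq - sqΣ) + 2K•(sq a) + 2•Σsq
    have h2 : sle (star (∑ i ∈ F', f i) * (∑ i ∈ F', f i)) (K • ∑ i ∈ F', star (f i) * f i) :=
      hle
    unfold sle at par h2 ⊢
    have expand : (2 + 2 * K) • (star (f a) * f a + ∑ i ∈ F', star (f i) * f i)
        - star (f a + ∑ i ∈ F', f i) * (f a + ∑ i ∈ F', f i)
        = (star (f a) * f a + star (f a) * f a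
            + (star (∑ i ∈ F', f i) * (∑ i ∈ F', f i) + star (∑ i ∈ F', f i) * (∑ i ∈ F', f i))
            - star (f a + ∑ i ∈ F', f i) * (f a + ∑ i ∈ F', f i))
          + ((2 : ℝ) • ((K • ∑ i ∈ F', star (f i) * f i)
              - star (∑ i ∈ F', f i) * (∑ i ∈ F', f i)))
          + ((2 * K) • (star (f a) * f a) + (2 : ℝ) • ∑ i ∈ F', star (f i) * f i) := by
      module
    rw [expand]
    refine (SOS A).add_mem ((SOS A).add_mem par (sos_smul (by norm_num) h2)) ?_
    refine (SOS A).add_mem (sos_smul (by positivity) (sq_mem _)) (sos_smul (by norm_num) ?_)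
    exact AddSubmonoid.sum_mem _ fun i _ => sq_mem _

end gen

/-! ### more generic helpers -/
section gen2
variable {A : Type*} [Ring A] [StarRing A] [Module ℝ A] [StarModule ℝ A]
  [IsScalarTower ℝ A A] [SMulCommClass ℝ A A]

lemma conj_smul (a : A) (c : ℝ) (y : A) :
    star a * (c • y) * a = c • (star a * y * a) := by
  rw [mul_smul_comm, smul_mul_assoc]

lemma sle_dom_trans {x y u : A} {c K : ℝ} (h1 : sle x (c • y)) (hc : 0 ≤ c)
    (h2 : sle y (K • u)) : sle x ((c * K) • u) := by
  have := sle_smul hc h2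
  rw [smul_smul] at this
  exact sle_trans h1 this

lemma sle_par4 {x p q u : A} {Kp Kq : ℝ} (h : sle x (p + p + (q + q)))
    (hp : sle p (Kp • u)) (hq : sle q (Kq • u)) :
    sle x ((2 * Kp + 2 * Kq) • u) := by
  have h2 := sle_add (sle_add hp hp) (sle_add hq hq)
  have e : Kp • u + Kp • u + (Kq • u + Kq • u) = (2 * Kp + 2 * Kq) • u := by module
  rw [e] at h2
  exact sle_trans h h2

lemma sle_par_sub (a b : A) :
    sle (star (a - b) * (a - b)) (star a * a + star a * a + (star b * b + star b * b)) := by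
  have := sle_par a (-b)
  simpa [sub_eq_add_neg] using this

lemma sle_pm (c : ℝ) {x u : A} {K : ℝ} (hx : x ∈ SOS A) (hu : u ∈ SOS A)
    (hK : 0 ≤ K) (h : sle x (K • u)) : sle (c • x) ((|c| * K) • u) := by
  rcases le_or_gt 0 c with hc | hc
  · rw [abs_of_nonneg hc]
    rw [← smul_smul]
    exact sle_smul hc h
  · have h1 : sle (c • x) 0 := by
      unfold sle
      rw [zero_sub, ← neg_smul]
      exact sos_smul (by linarith) hx
    have h2 : sle 0 ((|c| * K) • u) := by
      unfold sle
      rw [sub_zero]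
      exact sos_smul (by positivity) hu
    exact sle_trans h1 h2

end gen2

/-! ### Group-ring specifics -/

/-- `1 - g` in the group ring. -/
def Dl (g : G) : RG := 1 - of ℝ G g

/-- `(1-g)*(1-g)`. -/
def sq' (g : G) : RG := star (Dl g) * Dl g

lemma Dl_one : Dl (1 : G) = 0 := by rw [Dl, map_one, sub_self]

lemma star_Dl (g : G) : star (Dl g) = Dl g⁻¹ := by
  rw [Dl, star_sub, star_one, star_of, Dl]

lemma Dl_inv (g : G) : Dl g⁻¹ = -(of ℝ G g⁻¹ * Dl g) := by
  rw [Dl, Dl, mul_sub, mul_one, ← map_mul, inv_mul_cancel, map_one, neg_sub]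

lemma sq'_one : sq' (1 : G) = 0 := by simp [sq', Dl_one]

lemma of_mul_of (g h : G) : (of ℝ G g) * (of ℝ G h) = of ℝ G (g * h) := (map_mul _ _ _).symm

lemma of_inv_mul_self (g : G) : (of ℝ G g⁻¹) * (of ℝ G g) = 1 := by
  rw [of_mul_of, inv_mul_cancel, map_one]

lemma sq'_inv (g : G) : sq' g⁻¹ = sq' g := by
  rw [sq', Dl_inv, star_neg, star_mul, star_of, star_Dl, inv_inv, neg_mul_neg,
    mul_assoc, ← mul_assoc (of ℝ G g), of_mul_of, mul_inv_cancel, map_one, one_mul,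
    ← star_Dl, sq']

lemma Dl_mul (g h : G) : Dl (g * h) = Dl g + of ℝ G g * Dl h := by
  simp only [Dl, mul_sub, mul_one, ← map_mul]
  abel

lemma star_of_mul_self (g : G) : star (of ℝ G g) * of ℝ G g = 1 := by
  rw [star_of, of_inv_mul_self]

lemma sq'_mul_dom {u : RG} {Kg Kh : ℝ} {g h : G} (hg : sle (sq' g) (Kg • u))
    (hh : sle (sq' h) (Kh • u)) : sle (sq' (g * h)) ((2 * Kg + 2 * Kh) • u) := by
  have hb : star (of ℝ G g * Dl h) * (of ℝ G g * Dl h) = sq' h := by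
    rw [star_mul, mul_assoc, ← mul_assoc (star (of ℝ G g)) (of ℝ G g),
      star_of_mul_self, one_mul, sq']
  have par := sle_par (Dl g) (of ℝ G g * Dl h)
  rw [hb, ← Dl_mul] at par
  exact sle_par4 par hg hh

lemma sq'_dom_of_gen {u : RG} {k : Set G}
    (hgen : ∀ s ∈ k, ∃ K : ℝ, 0 ≤ K ∧ sle (sq' s) (K • u)) :
    ∀ g ∈ Subgroup.closure k, ∃ K : ℝ, 0 ≤ K ∧ sle (sq' g) (K • u) := by
  intro g hg
  refine Subgroup.closure_induction hgen ?_ ?_ ?_ hg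
  · refine ⟨0, le_refl 0, ?_⟩
    rw [sq'_one]
    unfold sle
    simpa using (SOS RG).zero_mem
  · rintro x y _ _ ⟨Kx, hKx, hx⟩ ⟨Ky, hKy, hy⟩
    exact ⟨2 * Kx + 2 * Ky, by positivity, sq'_mul_dom hx hy⟩
  · rintro x _ ⟨K, hK, hx⟩
    rw [← sq'_inv] at hx
    exact ⟨K, hK, hx⟩


/-! ### box lemmas -/

variable (S : Finset G)

lemma box_succ (n : ℕ) : box S (n + 1) = ∑ s ∈ S, star (Dl s) * box S n * Dl s := rfl

lemma box_one_eq : box S 1 = ∑ s ∈ S, sq' s := by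
  rw [box_succ]
  refine Finset.sum_congr rfl fun s _ => ?_
  rw [sq']
  show star (Dl s) * box S 0 * Dl s = _
  rw [show box S 0 = 1 from rfl, mul_one]

lemma box_sos (n : ℕ) : box S n ∈ SOS RG := by
  induction n with
  | zero => exact one_mem_sos
  | succ n ih =>
    rw [box_succ]
    exact AddSubmonoid.sum_mem _ fun s _ => sos_conj _ ih

lemma sle_term_sum {s : G} (hs : s ∈ S) {f : G → RG} (hf : ∀ t ∈ S, f t ∈ SOS RG) :
    sle (f s) (∑ t ∈ S, f t) := by
  classical
  unfold sle
  rw [← Finset.add_sum_erase S f hs, add_sub_cancel_left]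
  exact AddSubmonoid.sum_mem _ fun t ht => hf t (Finset.mem_of_mem_erase ht)

variable {S}

/-- every `(1-g)*(1-g)` is dominated by a multiple of `□₁`. -/
lemma sq'_le_box1 (hS : Subgroup.closure (S : Set G) = ⊤) (g : G) :
    ∃ K : ℝ, 0 ≤ K ∧ sle (sq' g) (K • box S 1) := by
  refine sq'_dom_of_gen ?_ g (hS ▸ Subgroup.mem_top g)
  intro s hs
  refine ⟨1, zero_le_one, ?_⟩
  rw [one_smul, box_one_eq]
  exact sle_term_sum S hs fun t _ => sq_mem _

lemma conj_sq' (g s : G) : star (of ℝ G g) * sq' s * of ℝ G g = sq' (g⁻¹ * s * g) := by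
  have h : Dl s * of ℝ G g = of ℝ G g * Dl (g⁻¹ * s * g) := by
    rw [Dl, Dl, sub_mul, one_mul, mul_sub, mul_one, ← map_mul, ← map_mul]
    congr 2
    group
  have : star (of ℝ G g) * sq' s * of ℝ G g
      = star (Dl s * of ℝ G g) * (Dl s * of ℝ G g) := by
    rw [sq', star_mul]; noncomm_ring
  rw [this, h, star_mul, mul_assoc, ← mul_assoc (star (of ℝ G g)), star_of_mul_self,
    one_mul, ← sq']

/-- conjugation by a group element distorts `□₁` by a bounded factor. -/
lemma conj_box1 (hS : Subgroup.closure (S : Set G) = ⊤) (g : G) :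
    ∃ K : ℝ, 0 ≤ K ∧ sle (star (of ℝ G g) * box S 1 * of ℝ G g) (K • box S 1) := by
  have e : star (of ℝ G g) * box S 1 * of ℝ G g = ∑ s ∈ S, sq' (g⁻¹ * s * g) := by
    rw [box_one_eq, Finset.mul_sum, Finset.sum_mul]
    exact Finset.sum_congr rfl fun s _ => conj_sq' g s
  rw [e]
  refine sle_sum_dom S _ _ fun s _ => ?_
  exact sq'_le_box1 hS _

/-- every `(1-g)* □₁ (1-g)` is dominated by a multiple of `□₂`. -/
lemma dconj_le_box2 (hS : Subgroup.closure (S : Set G) = ⊤) (g : G) :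
    ∃ K : ℝ, 0 ≤ K ∧ sle (star (Dl g) * box S 1 * Dl g) (K • box S 2) := by
  have key : ∀ x ∈ Subgroup.closure (S : Set G),
      ∃ K : ℝ, 0 ≤ K ∧ sle (star (Dl x) * box S 1 * Dl x) (K • box S 2) := by
    intro x hx
    refine Subgroup.closure_induction ?_ ?_ ?_ ?_ hx
    · intro s hs
      refine ⟨1, zero_le_one, ?_⟩
      rw [one_smul, box_succ]
      exact sle_term_sum S hs fun t _ => sos_conj _ (box_sos S 1)
    · refine ⟨0, le_refl 0, ?_⟩
      rw [Dl_one]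
      unfold sle
      simpa using (SOS RG).zero_mem
    · rintro x y _ _ ⟨Kx, hKx, hxle⟩ ⟨Ky, hKy, hyle⟩
      obtain ⟨Kc, hKc, hc⟩ := conj_box1 hS x
      -- star b * box1 * b where b = of x * Dl y
      have hb : star (of ℝ G x * Dl y) * box S 1 * (of ℝ G x * Dl y)
          = star (Dl y) * (star (of ℝ G x) * box S 1 * of ℝ G x) * Dl y := by
        rw [star_mul]; noncomm_ring
      have hble : sle (star (of ℝ G x * Dl y) * box S 1 * (of ℝ G x * Dl y))
          ((Kc * Ky) • box S 2) := by
        rw [hb]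
        have h1 := sle_conj (Dl y) hc
        rw [conj_smul] at h1
        exact sle_dom_trans h1 hKc hyle
      have par := sle_par_mid (Dl x) (of ℝ G x * Dl y) (box_sos S 1)
      rw [← Dl_mul] at par
      exact ⟨2 * Kx + 2 * (Kc * Ky), by positivity, sle_par4 par hxle hble⟩
    · rintro x _ ⟨K, hK, hxle⟩
      obtain ⟨Kc, hKc, hc⟩ := conj_box1 hS x⁻¹
      have e : star (Dl x⁻¹) * box S 1 * Dl x⁻¹
          = star (Dl x) * (star (of ℝ G x⁻¹) * box S 1 * of ℝ G x⁻¹) * Dl x := by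
        rw [Dl_inv, star_neg, star_mul]; noncomm_ring
      refine ⟨Kc * K, by positivity, ?_⟩
      rw [e]
      have h1 := sle_conj (Dl x) hc
      rw [conj_smul] at h1
      exact sle_dom_trans h1 hKc hxle
  exact key g (hS ▸ Subgroup.mem_top g)

/-- `(1 - [a,b])` is a combination of products of two augmentation elements. -/
lemma Dl_commutatorElement (a b : G) :
    Dl ⁅a, b⁆ = of ℝ G (a * b) * (Dl b⁻¹ * Dl a⁻¹ - Dl a⁻¹ * Dl b⁻¹) := by
  have expand : Dl b⁻¹ * Dl a⁻¹ - Dl a⁻¹ * Dl b⁻¹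
      = of ℝ G (b⁻¹ * a⁻¹) - of ℝ G (a⁻¹ * b⁻¹) := by
    simp only [Dl, sub_mul, mul_sub, one_mul, mul_one, ← map_mul]
    abel
  rw [expand, mul_sub, ← map_mul, ← map_mul, Dl, commutatorElement_def,
    show (a * b) * (b⁻¹ * a⁻¹) = 1 by group,
    show (a * b) * (a⁻¹ * b⁻¹) = a * b * a⁻¹ * b⁻¹ by group, map_one]

lemma sq'_commutator_le_box2 (hS : Subgroup.closure (S : Set G) = ⊤) (a b : G) :
    ∃ K : ℝ, 0 ≤ K ∧ sle (sq' ⁅a, b⁆) (K • box S 2) := by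
  obtain ⟨K1, hK1, h1⟩ := sq'_le_box1 hS b⁻¹
  obtain ⟨K2, hK2, h2⟩ := dconj_le_box2 hS a⁻¹
  obtain ⟨K3, hK3, h3⟩ := sq'_le_box1 hS a⁻¹
  obtain ⟨K4, hK4, h4⟩ := dconj_le_box2 hS b⁻¹
  -- sq' [a,b] = star (P - Q) * (P - Q)
  have e : sq' ⁅a, b⁆ = star (Dl b⁻¹ * Dl a⁻¹ - Dl a⁻¹ * Dl b⁻¹)
      * (Dl b⁻¹ * Dl a⁻¹ - Dl a⁻¹ * Dl b⁻¹) := by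
    rw [sq', Dl_commutatorElement, star_mul, mul_assoc,
      ← mul_assoc (star (of ℝ G (a * b))), star_of_mul_self, one_mul]
  have par := sle_par_sub (Dl b⁻¹ * Dl a⁻¹) (Dl a⁻¹ * Dl b⁻¹)
  rw [← e] at par
  -- star P * P ≤ (K1 * K2) • box2
  have hP : sle (star (Dl b⁻¹ * Dl a⁻¹) * (Dl b⁻¹ * Dl a⁻¹)) ((K1 * K2) • box S 2) := by
    have : star (Dl b⁻¹ * Dl a⁻¹) * (Dl b⁻¹ * Dl a⁻¹)
        = star (Dl a⁻¹) * sq' b⁻¹ * Dl a⁻¹ := by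
      rw [star_mul, sq']; noncomm_ring
    rw [this]
    have h1' := sle_conj (Dl a⁻¹) h1
    rw [conj_smul] at h1'
    exact sle_dom_trans h1' hK1 h2
  have hQ : sle (star (Dl a⁻¹ * Dl b⁻¹) * (Dl a⁻¹ * Dl b⁻¹)) ((K3 * K4) • box S 2) := by
    have : star (Dl a⁻¹ * Dl b⁻¹) * (Dl a⁻¹ * Dl b⁻¹)
        = star (Dl b⁻¹) * sq' a⁻¹ * Dl b⁻¹ := by
      rw [star_mul, sq']; noncomm_ring
    rw [this]
    have h3' := sle_conj (Dl b⁻¹) h3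
    rw [conj_smul] at h3'
    exact sle_dom_trans h3' hK3 h4
  exact ⟨2 * (K1 * K2) + 2 * (K3 * K4), by positivity, sle_par4 par hP hQ⟩

lemma sq'_comm_le_box2 (hS : Subgroup.closure (S : Set G) = ⊤) :
    ∀ σ ∈ commutator G, ∃ K : ℝ, 0 ≤ K ∧ sle (sq' σ) (K • box S 2) := by
  intro σ hσ
  rw [commutator_eq_closure] at hσ
  refine sq'_dom_of_gen ?_ σ hσ
  rintro x ⟨a, b, rfl⟩
  exact sq'_commutator_le_box2 hS a b

/-! ### Iaug lemmas -/

lemma mem_Iaug_iff (x : RG) : x ∈ Iaug G ↔ (MonoidAlgebra.lift ℝ ℝ G 1) x = 0 := by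
  rw [Iaug, LinearMap.mem_ker, AlgHom.toLinearMap_apply]

lemma Dl_mem_Iaug (g : G) : Dl g ∈ Iaug G := by
  rw [mem_Iaug_iff, Dl, map_sub, map_one, MonoidAlgebra.lift_of, MonoidHom.one_apply, sub_self]

lemma Iaug_mul_left {x : RG} (y : RG) (hx : x ∈ Iaug G) : x * y ∈ Iaug G := by
  rw [mem_Iaug_iff] at hx ⊢
  rw [map_mul, hx, zero_mul]

lemma Iaug_mul_right (x : RG) {y : RG} (hy : y ∈ Iaug G) : x * y ∈ Iaug G := by
  rw [mem_Iaug_iff] at hy ⊢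
  rw [map_mul, hy, mul_zero]

lemma box_mem_Iaug (S : Finset G) {n : ℕ} (hn : 1 ≤ n) : box S n ∈ Iaug G := by
  obtain ⟨m, rfl⟩ := Nat.exists_eq_add_of_le hn
  rw [show 1 + m = m + 1 by ring, box_succ]
  exact Submodule.sum_mem _ fun s _ => Iaug_mul_right _ (Dl_mem_Iaug s)

/-! ### Finite abelianization: `□₁ ≤ K □₂` -/

lemma m_smul_Dl (s : G) : ∀ m : ℕ,
    (m : ℝ) • Dl s = Dl (s ^ m) + (∑ k ∈ Finset.range m, Dl (s ^ k)) * Dl s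
  | 0 => by simp [Dl_one]
  | (m + 1) => by
    have ih := m_smul_Dl s m
    rw [Nat.cast_succ, add_smul, one_smul, ih, Finset.sum_range_succ, add_mul]
    simp only [Dl, map_pow]
    noncomm_ring

lemma sq'_le_box2 [Finite (Abelianization G)] (hS : Subgroup.closure (S : Set G) = ⊤)
    (s : G) : ∃ K : ℝ, 0 ≤ K ∧ sle (sq' s) (K • box S 2) := by
  set m := orderOf (Abelianization.of s) with hmdef
  have hm : 0 < m := orderOf_pos _
  have hker : s ^ m ∈ commutator G := by
    have h1 : (Abelianization.of s) ^ m = 1 := pow_orderOf_eq_one _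
    have h2 : Abelianization.of (s ^ m) = 1 := by rw [map_pow]; exact h1
    exact (QuotientGroup.eq_one_iff _).mp h2
  obtain ⟨K1, hK1, h1⟩ := sq'_comm_le_box2 hS _ hker
  have key := m_smul_Dl s m
  have lhs : star ((m : ℝ) • Dl s) * ((m : ℝ) • Dl s) = ((m : ℝ) * (m : ℝ)) • sq' s := by
    rw [star_smul, star_trivial ((m : ℝ)), smul_mul_assoc, mul_smul_comm, smul_smul, sq']
  have par := sle_par (Dl (s ^ m)) ((∑ k ∈ Finset.range m, Dl (s ^ k)) * Dl s)
  rw [← key, lhs] at par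
  have e1 : star (Dl (s ^ m)) * Dl (s ^ m) = sq' (s ^ m) := rfl
  rw [e1] at par
  -- bound the second square
  obtain ⟨Kc, hKc, hcs⟩ := sle_cs (Finset.range m) (fun k => Dl (s ^ k) * Dl s)
  have hterm : ∀ k ∈ Finset.range m, ∃ K : ℝ, 0 ≤ K ∧
      sle (star (Dl (s ^ k) * Dl s) * (Dl (s ^ k) * Dl s)) (K • box S 2) := by
    intro k _
    obtain ⟨Ka, hKa, ha⟩ := sq'_le_box1 hS (s ^ k)
    obtain ⟨Kb, hKb, hb⟩ := dconj_le_box2 hS s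
    have e : star (Dl (s ^ k) * Dl s) * (Dl (s ^ k) * Dl s)
        = star (Dl s) * sq' (s ^ k) * Dl s := by
      rw [star_mul, sq']; noncomm_ring
    rw [e]
    have ha' := sle_conj (Dl s) ha
    rw [conj_smul] at ha'
    exact ⟨Ka * Kb, by positivity, sle_dom_trans ha' hKa hb⟩
  obtain ⟨K2, hK2, h2⟩ := sle_sum_dom (Finset.range m) _ (box S 2) hterm
  have hqd : (∑ k ∈ Finset.range m, Dl (s ^ k)) * Dl s
      = ∑ k ∈ Finset.range m, Dl (s ^ k) * Dl s := Finset.sum_mul _ _ _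
  have hb2 : sle (star ((∑ k ∈ Finset.range m, Dl (s ^ k)) * Dl s)
      * ((∑ k ∈ Finset.range m, Dl (s ^ k)) * Dl s)) ((Kc * K2) • box S 2) := by
    rw [hqd]
    exact sle_dom_trans hcs hKc h2
  have main := sle_par4 par h1 hb2
  set Kt := 2 * K1 + 2 * (Kc * K2) with hKt
  have hKtpos : 0 ≤ Kt := by positivity
  refine ⟨Kt / ((m : ℝ) * (m : ℝ)), by positivity, ?_⟩
  have hmul := sle_smul (show (0:ℝ) ≤ 1 / ((m : ℝ) * (m : ℝ)) by positivity) main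
  have hmne : ((m : ℝ) * (m : ℝ)) ≠ 0 := by positivity
  rw [smul_smul, smul_smul, one_div_mul_cancel hmne, one_smul, one_div_mul_eq_div] at hmul
  exact hmul

lemma box1_le_box2 [Finite (Abelianization G)] (hS : Subgroup.closure (S : Set G) = ⊤) :
    ∃ K : ℝ, 0 ≤ K ∧ sle (box S 1) (K • box S 2) := by
  rw [box_one_eq]
  exact sle_sum_dom S _ _ fun s _ => sq'_le_box2 hS s

lemma box_step [Finite (Abelianization G)] (hS : Subgroup.closure (S : Set G) = ⊤) :
    ∃ K : ℝ, 0 ≤ K ∧ ∀ m : ℕ, 1 ≤ m → sle (box S m) (K • box S (m + 1)) := by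
  obtain ⟨K, hK, h⟩ := box1_le_box2 (S := S) hS
  refine ⟨K, hK, ?_⟩
  intro m hm
  induction m, hm using Nat.le_induction with
  | base => exact h
  | succ m hm ih =>
    have hsum := sle_sum (F := S) (f := fun s => star (Dl s) * box S m * Dl s)
      (g := fun s => star (Dl s) * (K • box S (m + 1)) * Dl s)
      (fun s _ => sle_conj (Dl s) ih)
    rw [← box_succ] at hsum
    have e : ∑ s ∈ S, star (Dl s) * (K • box S (m + 1)) * Dl s
        = K • box S (m + 2) := by
      conv_rhs => rw [box_succ, Finset.smul_sum]
      exact Finset.sum_congr rfl fun s _ => conj_smul _ _ _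
    rw [e] at hsum
    exact hsum

lemma box1_le_boxn [Finite (Abelianization G)] (hS : Subgroup.closure (S : Set G) = ⊤)
    {n : ℕ} (hn : 1 ≤ n) : ∃ K : ℝ, 0 ≤ K ∧ sle (box S 1) (K • box S n) := by
  obtain ⟨Ks, hKs, hstep⟩ := box_step (S := S) hS
  induction n, hn using Nat.le_induction with
  | base => exact ⟨1, zero_le_one, by rw [one_smul]; exact sle_refl _⟩
  | succ n hn ih =>
    obtain ⟨K, hK, h⟩ := ih
    exact ⟨K * Ks, by positivity, sle_dom_trans h hK (hstep n hn)⟩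

/-! ### the scalar order-unit statement -/

lemma aug_sum_eq (x : RG) (hx : x ∈ Iaug G) : ∑ g ∈ x.coeff.support, x.coeff g = 0 := by
  rw [mem_Iaug_iff, MonoidAlgebra.lift_apply] at hx
  simpa [Finsupp.sum] using hx

lemma Dl_decomp {x : RG} (hx : x ∈ Iaug G) : -x = ∑ g ∈ x.coeff.support, (x.coeff g) • Dl g := by
  simp only [Dl, smul_sub]
  rw [Finset.sum_sub_distrib, ← Finset.sum_smul, aug_sum_eq x hx, zero_smul, zero_sub]
  congr 1
  have : ∀ g : G, (x.coeff g) • (of ℝ G g : RG) = MonoidAlgebra.single g (x.coeff g) := by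
    intro g
    rw [MonoidAlgebra.of_apply, MonoidAlgebra.smul_single', mul_one]
  rw [Finset.sum_congr rfl fun g _ => this g]
  have h0 := MonoidAlgebra.sum_coeff_single x
  unfold Finsupp.sum at h0
  exact h0.symm

lemma Dl_add_inv (g : G) : Dl g + Dl g⁻¹ = sq' g := by
  rw [sq', star_Dl]
  simp only [Dl, sub_mul, mul_sub, one_mul, mul_one, of_inv_mul_self]
  abel

lemma herm_decomp {x : RG} (hx : x ∈ Iaug G) (hherm : star x = x) :
    -((2:ℝ) • x) = ∑ g ∈ x.coeff.support, (x.coeff g) • sq' g := by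
  have d := Dl_decomp hx
  have dstar : -x = ∑ g ∈ x.coeff.support, (x.coeff g) • Dl g⁻¹ := by
    conv_lhs => rw [← hherm, ← star_neg, d]
    rw [star_sum]
    exact Finset.sum_congr rfl fun g _ => by rw [star_smul, star_trivial, star_Dl]
  have e : -((2:ℝ) • x) = -x + -x := by module
  rw [e]
  nth_rewrite 1 [d]
  rw [dstar, ← Finset.sum_add_distrib]
  exact Finset.sum_congr rfl fun g _ => by rw [← smul_add, Dl_add_inv]

lemma scalar_ou1 (hS : Subgroup.closure (S : Set G) = ⊤) {x : RG}
    (hx : x ∈ Iaug G) (hherm : star x = x) :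
    ∃ R : ℝ, 0 ≤ R ∧ sle (-x) (R • box S 1) := by
  have hd := herm_decomp hx hherm
  have hper : ∀ g ∈ x.coeff.support, ∃ R : ℝ, 0 ≤ R ∧ sle ((x.coeff g) • sq' g) (R • box S 1) := by
    intro g _
    obtain ⟨K, hK, h⟩ := sq'_le_box1 hS g
    exact ⟨|x.coeff g| * K, by positivity, sle_pm (x.coeff g) (sq_mem (Dl g)) (box_sos S 1) hK h⟩
  obtain ⟨R, hR, h⟩ := sle_sum_dom x.coeff.support _ (box S 1) hper
  rw [← hd] at h
  have h2 := sle_smul (show (0:ℝ) ≤ 1/2 by norm_num) h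
  have e1 : (1/2 : ℝ) • (-((2:ℝ) • x)) = -x := by module
  have e2 : (1/2 : ℝ) • (R • box S 1) = (R/2) • box S 1 := by module
  rw [e1, e2] at h2
  exact ⟨R/2, by positivity, h2⟩

/-- The scalar order-unit statement: any hermitian element of the augmentation ideal
plus a suitable multiple of `□ₙ` is a sum of squares. -/
lemma scalar_ou [Finite (Abelianization G)] (hS : Subgroup.closure (S : Set G) = ⊤)
    {n : ℕ} (hn : 1 ≤ n) {x : RG} (hx : x ∈ Iaug G) (hherm : star x = x) :
    ∃ R : ℝ, 0 ≤ R ∧ x + R • box S n ∈ SOS RG := by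
  obtain ⟨R, hR, h⟩ := scalar_ou1 hS hx hherm
  obtain ⟨K, hK, hbox⟩ := box1_le_boxn (S := S) hS hn
  have := sle_dom_trans h hR hbox
  refine ⟨R * K, by positivity, ?_⟩
  have e : (R * K) • box S n - -x = x + (R * K) • box S n := by module
  unfold sle at this
  rwa [e] at this

/-! ### `I[G] = I[G]²` when the abelianization is finite -/

/-- the `ℝ`-span of products of two augmentation-ideal elements. -/
def I2span (G : Type) [Group G] : Submodule ℝ (MonoidAlgebra ℝ G) :=
  Submodule.span ℝ {x | ∃ a ∈ Iaug G, ∃ b ∈ Iaug G, x = a * b}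

lemma mul_mem_I2span {a b : RG} (ha : a ∈ Iaug G) (hb : b ∈ Iaug G) :
    a * b ∈ I2span G :=
  Submodule.subset_span ⟨a, ha, b, hb, rfl⟩

lemma of_mul_I2span (g : G) {x : RG} (hx : x ∈ I2span G) : of ℝ G g * x ∈ I2span G := by
  refine Submodule.span_induction ?_ ?_ ?_ ?_ hx
  · rintro y ⟨a, ha, b, hb, rfl⟩
    rw [← mul_assoc]
    exact mul_mem_I2span (Iaug_mul_right _ ha) hb
  · rw [mul_zero]; exact Submodule.zero_mem _
  · intro y z _ _ hy hz
    rw [mul_add]; exact Submodule.add_mem _ hy hz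
  · intro c y _ hy
    rw [mul_smul_comm]; exact Submodule.smul_mem _ _ hy

lemma Dl_comm_mem_I2span : ∀ σ ∈ commutator G, Dl σ ∈ I2span G := by
  intro σ hσ
  rw [commutator_eq_closure] at hσ
  refine Subgroup.closure_induction ?_ ?_ ?_ ?_ hσ
  · rintro x ⟨a, b, rfl⟩
    rw [Dl_commutatorElement]
    exact of_mul_I2span _ (Submodule.sub_mem _
      (mul_mem_I2span (Dl_mem_Iaug _) (Dl_mem_Iaug _))
      (mul_mem_I2span (Dl_mem_Iaug _) (Dl_mem_Iaug _)))
  · rw [Dl_one]; exact Submodule.zero_mem _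
  · intro x y _ _ hx hy
    rw [Dl_mul]
    exact Submodule.add_mem _ hx (of_mul_I2span _ hy)
  · intro x _ hx
    rw [Dl_inv]
    exact Submodule.neg_mem _ (of_mul_I2span _ hx)

lemma Dl_mem_I2span [Finite (Abelianization G)] (hS : Subgroup.closure (S : Set G) = ⊤)
    (g : G) : Dl g ∈ I2span G := by
  have key : ∀ x ∈ Subgroup.closure (S : Set G), Dl x ∈ I2span G := by
    intro x hx
    refine Subgroup.closure_induction ?_ ?_ ?_ ?_ hx
    · intro s _
      set m := orderOf (Abelianization.of s) with hmdef
      have hm : 0 < m := orderOf_pos _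
      have hker : s ^ m ∈ commutator G := by
        have h1 : (Abelianization.of s) ^ m = 1 := pow_orderOf_eq_one _
        have h2 : Abelianization.of (s ^ m) = 1 := by rw [map_pow]; exact h1
        exact (QuotientGroup.eq_one_iff _).mp h2
      have key := m_smul_Dl s m
      have hrhs : Dl (s ^ m) + (∑ k ∈ Finset.range m, Dl (s ^ k)) * Dl s ∈ I2span G := by
        refine Submodule.add_mem _ (Dl_comm_mem_I2span _ hker) ?_
        refine mul_mem_I2span ?_ (Dl_mem_Iaug s)
        exact Submodule.sum_mem _ fun k _ => Dl_mem_Iaug _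
      rw [← key] at hrhs
      have := Submodule.smul_mem (I2span G) ((m : ℝ)⁻¹) hrhs
      rwa [smul_smul, inv_mul_cancel₀ (by positivity), one_smul] at this
    · rw [Dl_one]; exact Submodule.zero_mem _
    · intro x y _ _ hx hy
      rw [Dl_mul]
      exact Submodule.add_mem _ hx (of_mul_I2span _ hy)
    · intro x _ hx
      rw [Dl_inv]
      exact Submodule.neg_mem _ (of_mul_I2span _ hx)
  exact key g (hS ▸ Subgroup.mem_top g)

lemma Iaug_le_I2span [Finite (Abelianization G)] (hS : Subgroup.closure (S : Set G) = ⊤)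
    {x : RG} (hx : x ∈ Iaug G) : x ∈ I2span G := by
  have d := Dl_decomp hx
  have : -x ∈ I2span G := by
    rw [d]
    exact Submodule.sum_mem _ fun g _ => Submodule.smul_mem _ _ (Dl_mem_I2span hS g)
  simpa using Submodule.neg_mem _ this

/-! ### matrices -/

section matrices
variable {ι : Type} [Fintype ι] [DecidableEq ι]

lemma star_stdBasisMatrix (i j : ι) (x : RG) :
    star (Matrix.single i j x) = Matrix.single j i (star x) := by
  refine Matrix.ext fun a b => ?_
  rw [Matrix.star_apply]
  by_cases h1 : b = i <;> by_cases h2 : a = j <;>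
    simp [Matrix.single, Matrix.of_apply, h1, h2,
      apply_ite (star : MonoidAlgebra ℝ G → MonoidAlgebra ℝ G), and_comm]

lemma stdB_neg (i j : ι) (x : RG) :
    Matrix.single i j (-x) = -(Matrix.single i j x) := by
  refine Matrix.ext fun a b => ?_
  by_cases h1 : a = i <;> by_cases h2 : b = j <;>
    simp [Matrix.single, Matrix.of_apply, h1, h2,
      apply_ite (Neg.neg : MonoidAlgebra ℝ G → MonoidAlgebra ℝ G)]

lemma stdB_sos {x : RG} (hx : x ∈ SOS RG) (p : ι) :
    Matrix.single p p x ∈ SOS (Matrix ι ι RG) := by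
  refine AddSubmonoid.closure_induction ?_ ?_ ?_ hx
  · rintro y ⟨a, rfl⟩
    have : Matrix.single p p (star a * a)
        = star (Matrix.single p p a) * Matrix.single p p a := by
      rw [star_stdBasisMatrix, Matrix.single_mul_single_same]
    rw [this]; exact sq_mem _
  · rw [Matrix.single_zero]; exact (SOS _).zero_mem
  · intro x y _ _ hx hy
    rw [Matrix.single_add]
    exact (SOS _).add_mem hx hy

lemma diag_eq_sum (x : RG) :
    (Matrix.diagonal fun _ : ι => x) = ∑ p : ι, Matrix.single p p x := by
  refine Matrix.ext fun a b => ?_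
  rw [Matrix.sum_apply]
  by_cases h : a = b
  · subst h
    rw [Matrix.diagonal_apply_eq]
    rw [Finset.sum_eq_single a (fun p _ hp => by
      simp [Matrix.single, Matrix.of_apply, hp]) (by simp)]
    simp [Matrix.single, Matrix.of_apply]
  · rw [Matrix.diagonal_apply_ne _ h]
    exact (Finset.sum_eq_zero fun p _ => by
      simp only [Matrix.single, Matrix.of_apply, ite_eq_right_iff]
      rintro ⟨rfl, rfl⟩
      exact absurd rfl h).symm

variable (S : Finset G) (n : ℕ)

/-- order-unit domination by `diag(□ₙ)` for matrices. -/
def Pmat (H : Matrix ι ι RG) : Prop :=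
  ∃ R : ℝ, 0 ≤ R ∧
    H + R • (Matrix.diagonal fun _ : ι => box S n) ∈ SOS (Matrix ι ι RG)

variable {S n}

lemma Pmat_sos {H : Matrix ι ι RG} (h : H ∈ SOS (Matrix ι ι RG)) : Pmat S n H :=
  ⟨0, le_refl 0, by rwa [zero_smul, add_zero]⟩

lemma Pmat_add {H1 H2 : Matrix ι ι RG} (h1 : Pmat S n H1) (h2 : Pmat S n H2) :
    Pmat S n (H1 + H2) := by
  obtain ⟨R1, hR1, hs1⟩ := h1
  obtain ⟨R2, hR2, hs2⟩ := h2
  refine ⟨R1 + R2, by positivity, ?_⟩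
  have e : H1 + H2 + (R1 + R2) • (Matrix.diagonal fun _ : ι => box S n)
      = (H1 + R1 • (Matrix.diagonal fun _ : ι => box S n))
        + (H2 + R2 • (Matrix.diagonal fun _ : ι => box S n)) := by module
  rw [e]
  exact (SOS _).add_mem hs1 hs2

lemma Pmat_smul {c : ℝ} (hc : 0 ≤ c) {H : Matrix ι ι RG} (h : Pmat S n H) :
    Pmat S n (c • H) := by
  obtain ⟨R, hR, hs⟩ := h
  refine ⟨c * R, by positivity, ?_⟩
  have e : c • H + (c * R) • (Matrix.diagonal fun _ : ι => box S n)
      = c • (H + R • (Matrix.diagonal fun _ : ι => box S n)) := by module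
  rw [e]
  exact sos_smul hc hs

lemma Pmat_sum {κ : Type*} (F : Finset κ) (f : κ → Matrix ι ι RG)
    (h : ∀ i ∈ F, Pmat S n (f i)) : Pmat S n (∑ i ∈ F, f i) := by
  classical
  induction F using Finset.induction_on with
  | empty => exact Pmat_sos (by rw [Finset.sum_empty]; exact (SOS _).zero_mem)
  | @insert a F' hx ih =>
    rw [Finset.sum_insert hx]
    exact Pmat_add (h a (Finset.mem_insert_self a F'))
      (ih fun i hi => h i (Finset.mem_insert_of_mem hi))

lemma Pmat_diag_herm [Finite (Abelianization G)] (hS : Subgroup.closure (S : Set G) = ⊤)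
    (hn : 1 ≤ n) (p : ι) {ξ : RG} (hξ : ξ ∈ Iaug G) (hherm : star ξ = ξ) :
    Pmat S n (Matrix.single p p ξ) := by
  obtain ⟨R, hR, hsos⟩ := scalar_ou (S := S) hS hn hξ hherm
  refine ⟨R, hR, ?_⟩
  have e : Matrix.single p p ξ + R • (Matrix.diagonal fun _ : ι => box S n)
      = Matrix.single p p (ξ + R • box S n)
        + ∑ q ∈ Finset.univ.erase p, Matrix.single q q (R • box S n) := by
    rw [diag_eq_sum, Finset.smul_sum]
    have e2 : ∀ q : ι, R • Matrix.single q q (box S n)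
        = Matrix.single q q (R • box S n) := fun q =>
      Matrix.smul_single R q q (box S n)
    rw [Finset.sum_congr rfl fun q _ => e2 q,
      ← Finset.add_sum_erase Finset.univ _ (Finset.mem_univ p),
      Matrix.single_add]
    abel
  rw [e]
  refine (SOS _).add_mem (stdB_sos hsos p) ?_
  exact AddSubmonoid.sum_mem _ fun q _ => stdB_sos (sos_smul hR (box_sos S n)) q

/-- the hermitian pair of off-diagonal matrix units. -/
def Herm2 (p q : ι) (x : RG) : Matrix ι ι RG :=
  Matrix.single p q x + Matrix.single q p (star x)

lemma key_identity (p q : ι) (a y : RG) :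
    Matrix.single p q (a * y) + Matrix.single q p (star y * star a)
      = star (Matrix.single p p (star a) + Matrix.single p q y)
          * (Matrix.single p p (star a) + Matrix.single p q y)
        + Matrix.single p p (-(a * star a))
        + Matrix.single q q (-(star y * y)) := by
  rw [star_add, star_stdBasisMatrix, star_stdBasisMatrix, star_star, add_mul, mul_add,
    mul_add, Matrix.single_mul_single_same, Matrix.single_mul_single_same,
    Matrix.single_mul_single_same, Matrix.single_mul_single_same, stdB_neg, stdB_neg]
  abel

lemma Pmat_herm2 [Finite (Abelianization G)] (hS : Subgroup.closure (S : Set G) = ⊤)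
    (hn : 1 ≤ n) (p q : ι) {x : RG} (hx : x ∈ I2span G) :
    Pmat S n (Herm2 p q x) ∧ Pmat S n (-Herm2 p q x) := by
  refine Submodule.span_induction ?_ ?_ ?_ ?_ hx
  · rintro z ⟨a, ha, b, hb, rfl⟩
    constructor
    · -- Herm2 p q (a*b): use y = b
      have key := key_identity p q a b
      have e : Herm2 p q (a * b)
          = star (Matrix.single p p (star a) + Matrix.single p q b)
              * (Matrix.single p p (star a) + Matrix.single p q b)
            + Matrix.single p p (-(a * star a))
            + Matrix.single q q (-(star b * b)) := by
        rw [Herm2, star_mul, key]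
      rw [e]
      refine Pmat_add (Pmat_add (Pmat_sos (sq_mem _)) ?_) ?_
      · exact Pmat_diag_herm hS hn p
          (Submodule.neg_mem _ (Iaug_mul_left _ ha))
          (by rw [star_neg, star_mul, star_star])
      · exact Pmat_diag_herm hS hn q
          (Submodule.neg_mem _ (Iaug_mul_right _ hb))
          (by rw [star_neg, star_mul, star_star])
    · -- -Herm2 p q (a*b): use y = -b
      have key := key_identity p q a (-b)
      have e : -Herm2 p q (a * b)
          = star (Matrix.single p p (star a) + Matrix.single p q (-b))
              * (Matrix.single p p (star a) + Matrix.single p q (-b))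
            + Matrix.single p p (-(a * star a))
            + Matrix.single q q (-(star b * b)) := by
      -- LHS of key: stdB p q (a * -b) + stdB q p (star (-b) * star a)
      --   = -(stdB p q (a*b)) + -(stdB q p (star b * star a)) = -Herm2 p q (a*b)
        have e1 : a * (-b) = -(a * b) := by rw [mul_neg]
        have e2 : star (-b) * star a = -(star (a * b)) := by
          rw [star_neg, neg_mul, star_mul]
        have e3 : star (-b) * (-b) = star b * b := by
          rw [star_neg, neg_mul_neg]
        rw [e1, e2, e3] at key
        rw [stdB_neg, stdB_neg] at key
        rw [Herm2, neg_add, key]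
      rw [e]
      refine Pmat_add (Pmat_add (Pmat_sos (sq_mem _)) ?_) ?_
      · exact Pmat_diag_herm hS hn p
          (Submodule.neg_mem _ (Iaug_mul_left _ ha))
          (by rw [star_neg, star_mul, star_star])
      · exact Pmat_diag_herm hS hn q
          (Submodule.neg_mem _ (Iaug_mul_right _ hb))
          (by rw [star_neg, star_mul, star_star])
  · constructor <;>
      · refine Pmat_sos ?_
        simp only [Herm2, star_zero, Matrix.single_zero, add_zero, neg_zero]
        exact (SOS _).zero_mem
  · intro y z _ _ hy hz
    have e : Herm2 p q (y + z) = Herm2 p q y + Herm2 p q z := by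
      rw [Herm2, Herm2, Herm2, star_add, Matrix.single_add,
        Matrix.single_add]
      abel
    constructor
    · rw [e]; exact Pmat_add hy.1 hz.1
    · rw [e, neg_add]; exact Pmat_add hy.2 hz.2
  · intro c y _ hy
    have e : Herm2 p q (c • y) = c • Herm2 p q y := by
      rw [Herm2, Herm2, star_smul, star_trivial c, smul_add,
        Matrix.smul_single, Matrix.smul_single]
    rcases le_or_gt 0 c with hc | hc
    · constructor
      · rw [e]; exact Pmat_smul hc hy.1
      · rw [e, ← smul_neg]; exact Pmat_smul hc hy.2
    · constructor
      · rw [e, show c • Herm2 p q y = (-c) • (-Herm2 p q y) by module]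
        exact Pmat_smul (by linarith) hy.2
      · rw [e, show -(c • Herm2 p q y) = (-c) • Herm2 p q y by module]
        exact Pmat_smul (by linarith) hy.1

lemma Pmat_main [Finite (Abelianization G)] (hS : Subgroup.closure (S : Set G) = ⊤)
    (hn : 1 ≤ n) (M : Matrix ι ι RG) (hM : ∀ p q : ι, M p q ∈ Iaug G)
    (hherm : star M = M) : Pmat S n M := by
  have decomp : (2 : ℝ) • M = ∑ p : ι, ∑ q : ι, Herm2 p q (M p q) := by
    have e1 : ∑ p : ι, ∑ q : ι, Herm2 p q (M p q)
        = (∑ p : ι, ∑ q : ι, Matrix.single p q (M p q))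
          + ∑ p : ι, ∑ q : ι, Matrix.single q p (star (M p q)) := by
      simp only [Herm2, Finset.sum_add_distrib]
    have e2 : ∑ p : ι, ∑ q : ι, Matrix.single q p (star (M p q))
        = ∑ p : ι, ∑ q : ι, Matrix.single p q (star (M q p)) :=
      Finset.sum_comm
    have e3 : ∀ p q : ι, star (M q p) = M p q := by
      intro p q
      conv_rhs => rw [← hherm]
      rw [Matrix.star_apply]
    rw [e1, e2]
    simp only [e3]
    rw [← Matrix.matrix_eq_sum_single M]
    module
  have h2 : Pmat S n ((2:ℝ) • M) := by
    rw [decomp]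
    exact Pmat_sum _ _ fun p _ => Pmat_sum _ _ fun q _ =>
      (Pmat_herm2 hS hn p q (Iaug_le_I2span hS (hM p q))).1
  have := Pmat_smul (show (0:ℝ) ≤ 1/2 by norm_num) h2
  rwa [show (1/2 : ℝ) • ((2:ℝ) • M) = M by module] at this

end matrices

end
end OUaux

/-- For `G` with finite abelianization and finite symmetric generating set `S`,
`diag(□ₙ)` is an order unit in `M_{|S|×|S|}(I[G])` for each `n ≥ 1`. -/
theorem diag_box_order_unit (G : Type) [Group G] [DecidableEq G] [Finite (Abelianization G)]
    (S : Finset G) (hS : Subgroup.closure (S : Set G) = ⊤)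
    (hsym : ∀ s ∈ S, s⁻¹ ∈ S) (n : ℕ) (hn : 1 ≤ n) :
    ∀ M : Matrix S S (MonoidAlgebra ℝ G), (∀ s t : S, M s t ∈ Iaug G) →
      star M = M →
      ∃ R : ℝ, 0 ≤ R ∧
        (∀ s t : S, (M + R • (Matrix.diagonal fun _ => box S n :
            Matrix S S (MonoidAlgebra ℝ G))) s t ∈ Iaug G) ∧
        (M + R • (Matrix.diagonal fun _ => box S n :
            Matrix S S (MonoidAlgebra ℝ G))) ∈
          SOS (Matrix S S (MonoidAlgebra ℝ G)) := by
  intro M hM hherm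
  obtain ⟨R, hR, hsos⟩ := OUaux.Pmat_main (ι := ↥S) hS hn M hM hherm
  refine ⟨R, hR, ?_, hsos⟩
  intro s t
  rw [Matrix.add_apply, Matrix.smul_apply]
  refine Submodule.add_mem _ (hM s t) ?_
  by_cases h : s = t
  · subst h
    rw [Matrix.diagonal_apply_eq]
    exact Submodule.smul_mem _ _ (OUaux.box_mem_Iaug S hn)
  · rw [Matrix.diagonal_apply_ne _ h, smul_zero]
    exact Submodule.zero_mem _
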